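/- arXiv:1512.08110 — 5 statements merged into one kernel-verified Lean document; each statement's English description precedes it below -/
import Mathlib

section
/- Double robustness of the efficient influence function: let D_{η,θ}(Z) = -(1/f(θ))·[ (M/e(X))·(1_{Y ≤ θ} - G(θ|1,X)) + G(θ|1,X) - q ], where η = (G, e). If either G = G₀ (the true conditional distribution of Y given M=1, X) or e = e₀ (the true missingness probability P₀(M=1|X)), then E₀[D_{η,θ₀}(Z)] = 0, where θ₀ is the true q-th quantile satisfying G₀-based F₀(θ₀) = q. -/
open MeasureTheory

/-!
Write `A = {Y ≤ θ₀}`, `B = {M = 1}` and `C x = {X = x}`. Splitting along the finitely many cells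
`C x`, the expectation of the bracket is
`∑ x, (P(A ∩ B ∩ C x) - G x * P(B ∩ C x)) / e x + (G x - q) * P(C x)`.
As `P(A ∩ B ∩ C x) = G₀ x * P(B ∩ C x)`, the first summand is `(G₀ x - G x) * P(B ∩ C x) / e x`:
it vanishes when `G = G₀`, and equals `(G₀ x - G x) * P(C x)` when `e = e₀`. Either way the cell
contributes `(G₀ x - q) * P(C x)`, and these sum to `q - q = 0`.
-/

section CellDecomposition

variable {Ω α : Type*} [MeasurableSpace Ω] [MeasurableSpace α] [Fintype α]
  [MeasurableSingletonClass α] {μ : Measure Ω} [IsFiniteMeasure μ] {X : Ω → α}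

theorem integrable_comp_of_fintype (hX : Measurable X) (f : α → ℝ) :
    Integrable (fun ω => f (X ω)) μ :=
  Integrable.of_finite.comp_measurable hX

theorem setIntegral_comp_eq_sum (hX : Measurable X) (s : Set Ω) (f : α → ℝ) :
    ∫ ω in s, f (X ω) ∂μ = ∑ x, μ.real (s ∩ X ⁻¹' {x}) * f x := by
  rw [← integral_map hX.aemeasurable Integrable.of_finite.aestronglyMeasurable,
    integral_fintype Integrable.of_finite]
  refine Finset.sum_congr rfl fun x _ => ?_
  rw [map_measureReal_apply hX (measurableSet_singleton x),
    measureReal_restrict_apply (hX (measurableSet_singleton x)), Set.inter_comm, smul_eq_mul]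

theorem integral_comp_eq_sum (hX : Measurable X) (f : α → ℝ) :
    ∫ ω, f (X ω) ∂μ = ∑ x, μ.real (X ⁻¹' {x}) * f x := by
  simpa using setIntegral_comp_eq_sum (μ := μ) hX Set.univ f

theorem integral_augmented_ipw_eq_sum (hX : Measurable X) {A B : Set Ω}
    (hA : MeasurableSet A) (hB : MeasurableSet B) (e G : α → ℝ) (q : ℝ) :
    ∫ ω, B.indicator (fun _ => (1 : ℝ)) ω / e (X ω)
          * (A.indicator (fun _ => (1 : ℝ)) ω - G (X ω)) + G (X ω) - q ∂μ
      = ∑ x, ((μ.real (A ∩ B ∩ X ⁻¹' {x}) - G x * μ.real (B ∩ X ⁻¹' {x})) / e x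
          + (G x - q) * μ.real (X ⁻¹' {x})) := by
  have hpointwise : (fun ω => B.indicator (fun _ => (1 : ℝ)) ω / e (X ω)
        * (A.indicator (fun _ => (1 : ℝ)) ω - G (X ω)) + G (X ω) - q)
      = (A ∩ B).indicator (fun ω => 1 / e (X ω)) - B.indicator (fun ω => G (X ω) / e (X ω))
        + fun ω => G (X ω) - q := by
    funext ω
    by_cases hAω : ω ∈ A <;> by_cases hBω : ω ∈ B <;> simp [hAω, hBω] <;> ring
  have hIAB := (integrable_comp_of_fintype (μ := μ) hX (fun x => 1 / e x)).indicator (hA.inter hB)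
  have hIB := (integrable_comp_of_fintype (μ := μ) hX (fun x => G x / e x)).indicator hB
  rw [hpointwise, integral_add' (hIAB.sub hIB) (integrable_comp_of_fintype hX fun x => G x - q),
    integral_sub' hIAB hIB, integral_indicator (hA.inter hB), integral_indicator hB,
    setIntegral_comp_eq_sum hX _ (fun x => 1 / e x),
    setIntegral_comp_eq_sum hX _ (fun x => G x / e x), integral_comp_eq_sum hX (fun x => G x - q),
    ← Finset.sum_sub_distrib, ← Finset.sum_add_distrib]
  refine Finset.sum_congr rfl fun x _ => ?_
  ring

end CellDecomposition

theorem augmented_ipw_cell_eq {Ω : Type*} [MeasurableSpace Ω] {μ : Measure Ω}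
    [IsFiniteMeasure μ] {A B C : Set Ω} {e G e₀ G₀ q : ℝ}
    (he₀ : e₀ = μ.real (B ∩ C) / μ.real C)
    (hG₀ : G₀ = μ.real (A ∩ B ∩ C) / μ.real (B ∩ C))
    (hpos : μ C ≠ 0 → μ (B ∩ C) ≠ 0)
    (hDR : (μ C ≠ 0 → G = G₀) ∨ (μ C ≠ 0 → e = e₀)) :
    (μ.real (A ∩ B ∩ C) - G * μ.real (B ∩ C)) / e + (G - q) * μ.real C
      = (G₀ - q) * μ.real C := by
  have hmass : G₀ * μ.real (B ∩ C) = μ.real (A ∩ B ∩ C) := by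
    rw [hG₀, div_mul_cancel_of_imp]
    exact fun h => le_antisymm
      ((measureReal_mono (Set.inter_subset_inter_left _ Set.inter_subset_right)).trans_eq h)
      measureReal_nonneg
  rw [← hmass]
  by_cases hC : μ C = 0
  · have hBC : μ (B ∩ C) = 0 := measure_mono_null Set.inter_subset_right hC
    simp [Measure.real, hC, hBC]
  rcases hDR with hG | he
  · rw [hG hC]
    ring
  · have hBC : μ.real (B ∩ C) ≠ 0 := (measureReal_ne_zero_iff).mpr (hpos hC)
    have hreweight : μ.real (B ∩ C) / e = μ.real C := by
      rw [he hC, he₀, div_div_cancel₀ hBC]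
    rw [← sub_mul, mul_div_assoc, hreweight]
    ring

theorem stmt1_general {Ω α : Type*} [MeasurableSpace Ω] [Fintype α] [MeasurableSpace α]
    [MeasurableSingletonClass α]
    (P : Measure Ω) [IsProbabilityMeasure P]
    (X : Ω → α) (M : Ω → ℕ) (Y : Ω → ℝ)
    (hX : Measurable X) (hM : Measurable M) (hY : Measurable Y)
    (θ₀ q fθ : ℝ)
    -- candidate nuisances:
    (e : α → ℝ) (G : α → ℝ)
    -- true nuisances:
    (e₀ G₀ : α → ℝ)
    (he₀ : ∀ x, e₀ x = (P ({ω | M ω = 1} ∩ {ω | X ω = x})).toReal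
                        / (P {ω | X ω = x}).toReal)
    (hG₀ : ∀ x, G₀ x = (P ({ω | Y ω ≤ θ₀} ∩ {ω | M ω = 1} ∩ {ω | X ω = x})).toReal
                        / (P ({ω | M ω = 1} ∩ {ω | X ω = x})).toReal)
    -- positivity:
    (hpos : ∀ x : α, P {ω | X ω = x} ≠ 0 → P ({ω | M ω = 1} ∩ {ω | X ω = x}) ≠ 0)
    -- θ₀ is the true q-th quantile:  F₀(θ₀) = q :
    (hθ₀ : ∑ x : α, G₀ x * (P {ω | X ω = x}).toReal = q)
    -- double robustness hypothesis: at least one nuisance is correct on the support of X: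
    (hDR : (∀ x : α, P {ω | X ω = x} ≠ 0 → G x = G₀ x)
           ∨ (∀ x : α, P {ω | X ω = x} ≠ 0 → e x = e₀ x)) :
    ∫ ω, -(1 / fθ)
        * ((Set.indicator {ω' | M ω' = 1} (fun _ => (1 : ℝ)) ω / e (X ω))
              * (Set.indicator {ω' | Y ω' ≤ θ₀} (fun _ => (1 : ℝ)) ω - G (X ω))
            + G (X ω) - q) ∂P = 0 := by
  set A := {ω | Y ω ≤ θ₀}
  set B := {ω | M ω = 1}
  have hA : MeasurableSet A := measurableSet_le hY measurable_const
  have hB : MeasurableSet B := hM (measurableSet_singleton 1)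
  have hC : ∀ x, {ω | X ω = x} = X ⁻¹' {x} := fun x => rfl
  simp only [hC, ← measureReal_def] at he₀ hG₀ hpos hθ₀ hDR
  have hcell x := augmented_ipw_cell_eq (A := A) (e := e x) (G := G x) (q := q) (he₀ x) (hG₀ x)
    (hpos x) (hDR.imp (· x) (· x))
  have htotal : ∑ x, P.real (X ⁻¹' {x}) = 1 := by
    rw [sum_measureReal_preimage_singleton _ fun x _ => hX (measurableSet_singleton x)]
    simp
  rw [integral_const_mul, integral_augmented_ipw_eq_sum hX hA hB,
    Finset.sum_congr rfl fun x _ => hcell x]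
  simp only [sub_mul, Finset.sum_sub_distrib, ← Finset.mul_sum, htotal, hθ₀]
  ring

/-- Double robustness of the efficient influence function: if either `G = G₀`
or `e = e₀` (on the support of `X`), then `E₀[D_{η,θ₀}(Z)] = 0`. -/
theorem stmt1 {Ω α : Type*} [MeasurableSpace Ω] [Fintype α] [MeasurableSpace α]
    [MeasurableSingletonClass α]
    (P : Measure Ω) [IsProbabilityMeasure P]
    (X : Ω → α) (M : Ω → ℕ) (Y : Ω → ℝ)
    (hX : Measurable X) (hM : Measurable M) (hY : Measurable Y)
    (θ₀ q fθ : ℝ) (hf : 0 < fθ) (hq : q ∈ Set.Ioo (0 : ℝ) 1)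
    -- candidate nuisances:
    (e : α → ℝ) (G : α → ℝ)
    (he : ∀ x, e x ∈ Set.Ioc (0 : ℝ) 1) (hG : ∀ x, G x ∈ Set.Icc (0 : ℝ) 1)
    -- true nuisances:
    (e₀ G₀ : α → ℝ)
    (he₀ : ∀ x, e₀ x = (P ({ω | M ω = 1} ∩ {ω | X ω = x})).toReal
                        / (P {ω | X ω = x}).toReal)
    (hG₀ : ∀ x, G₀ x = (P ({ω | Y ω ≤ θ₀} ∩ {ω | M ω = 1} ∩ {ω | X ω = x})).toReal
                        / (P ({ω | M ω = 1} ∩ {ω | X ω = x})).toReal)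
    -- conditional independence  Y ⟂ M ∣ X  (for the event {Y ≤ θ₀}):
    (hCI : ∀ x : α,
      P ({ω | Y ω ≤ θ₀} ∩ {ω | M ω = 1} ∩ {ω | X ω = x}) * P {ω | X ω = x}
        = P ({ω | Y ω ≤ θ₀} ∩ {ω | X ω = x}) * P ({ω | M ω = 1} ∩ {ω | X ω = x}))
    -- positivity:
    (hpos : ∀ x : α, P {ω | X ω = x} ≠ 0 → P ({ω | M ω = 1} ∩ {ω | X ω = x}) ≠ 0)
    -- θ₀ is the true q-th quantile:  F₀(θ₀) = q :
    (hθ₀ : ∑ x : α, G₀ x * (P {ω | X ω = x}).toReal = q)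
    -- double robustness hypothesis: at least one nuisance is correct on the support of X:
    (hDR : (∀ x : α, P {ω | X ω = x} ≠ 0 → G x = G₀ x)
           ∨ (∀ x : α, P {ω | X ω = x} ≠ 0 → e x = e₀ x)) :
    ∫ ω, -(1 / fθ)
        * ((Set.indicator {ω' | M ω' = 1} (fun _ => (1 : ℝ)) ω / e (X ω))
              * (Set.indicator {ω' | Y ω' ≤ θ₀} (fun _ => (1 : ℝ)) ω - G (X ω))
            + G (X ω) - q) ∂P = 0 :=
  stmt1_general P X M Y hX hM hY θ₀ q fθ e G e₀ G₀ he₀ hG₀ hpos hθ₀ hDR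
end

section
/- For the efficient influence function D_{η,θ}(Z) = -(1/f(θ))·[ (M/e(X))·(1_{Y ≤ θ} - G(θ|1,X)) + G(θ|1,X) - q ], the bias admits the exact representation E₀[D_{η,θ}] = -(1/f(θ))·E₀[ (e₀(X)/e(X) - 1)·(G₀(θ|1,X) - G(θ|1,X)) + (G₀(θ|1,X) - q) ]. -/
/-!
Since `X` takes finitely many values, the integrand is a finite combination of the indicators of
`{Y ≤ θ, M = 1, X = x}`, `{M = 1, X = x}` and `{X = x}`, so its expectation is a sum over the
cells `{X = x}` of their probabilities. On each cell the identity is then algebraic: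
`e₀ · P(X = x) · (G₀ - G) = P(Y ≤ θ, M = 1, X = x) - G · P(M = 1, X = x)`. With the convention
`a / 0 = 0` it persists on cells where `P(X = x)` or `P(M = 1, X = x)` vanishes, because the
smaller events are null there as well.
-/

open MeasureTheory

theorem comp_mul_indicator_one_eq_sum {Ω α : Type*} [Fintype α] (X : Ω → α) (T : Set Ω)
    (h : α → ℝ) (ω : Ω) :
    h (X ω) * T.indicator 1 ω = ∑ x, h x * (T ∩ {ω | X ω = x}).indicator 1 ω := by
  classical
  rw [Finset.sum_eq_single (X ω) (fun x _ hx => ?_) (by simp)]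
  · simp [Set.indicator_apply]
  · simp [Ne.symm hx]

section FiniteConditioning

variable {Ω α : Type*} [MeasurableSpace Ω] [Fintype α] [MeasurableSpace α]
  [MeasurableSingletonClass α] {P : Measure Ω} [IsFiniteMeasure P] {X : Ω → α} {T : Set Ω}

theorem integrable_comp_mul_indicator_one (hX : Measurable X) (hT : MeasurableSet T)
    (h : α → ℝ) : Integrable (fun ω => h (X ω) * T.indicator 1 ω) P := by
  simp_rw [comp_mul_indicator_one_eq_sum X T h]
  exact integrable_finsetSum _ fun x _ =>
    ((integrable_const 1).indicator (hT.inter (hX (measurableSet_singleton x)))).const_mul _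

theorem integral_comp_mul_indicator_one (hX : Measurable X) (hT : MeasurableSet T)
    (h : α → ℝ) :
    ∫ ω, h (X ω) * T.indicator 1 ω ∂P = ∑ x, h x * P.real (T ∩ {ω | X ω = x}) := by
  have hmeas (x : α) : MeasurableSet (T ∩ {ω | X ω = x}) :=
    hT.inter (hX (measurableSet_singleton x))
  simp_rw [comp_mul_indicator_one_eq_sum X T h]
  rw [integral_finsetSum _ fun x _ => ((integrable_const 1).indicator (hmeas x)).const_mul _]
  simp_rw [integral_const_mul, integral_indicator_one (hmeas _)]

end FiniteConditioning

theorem cell_bias_eq {p pm pym e G q : ℝ} (hp : p = 0 → pm = 0) (hpm : pm = 0 → pym = 0) :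
    1 / e * pym - G / e * pm + (G - q) * p
      = ((pm / p / e - 1) * (pym / pm - G) + (pym / pm - q)) * p := by
  rcases eq_or_ne p 0 with rfl | hp0
  · simp [hp rfl, hpm (hp rfl)]
  rcases eq_or_ne pm 0 with rfl | hpm0
  · simp only [hpm rfl, div_zero, zero_div, mul_zero, zero_sub]
    ring
  field_simp
  ring

theorem stmt2_general {Ω α : Type*} [MeasurableSpace Ω] [Fintype α] [MeasurableSpace α]
    [MeasurableSingletonClass α]
    (P : Measure Ω) [IsProbabilityMeasure P]
    (X : Ω → α) (M : Ω → ℕ) (Y : Ω → ℝ)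
    (hX : Measurable X) (hM : Measurable M) (hY : Measurable Y)
    (θ q fθ : ℝ)
    (e : α → ℝ) (G : α → ℝ)
    (e₀ G₀ : α → ℝ)
    (he₀ : ∀ x, e₀ x = (P ({ω | M ω = 1} ∩ {ω | X ω = x})).toReal
                        / (P {ω | X ω = x}).toReal)
    (hG₀ : ∀ x, G₀ x = (P ({ω | Y ω ≤ θ} ∩ {ω | M ω = 1} ∩ {ω | X ω = x})).toReal
                        / (P ({ω | M ω = 1} ∩ {ω | X ω = x})).toReal) :
    ∫ ω, -(1 / fθ)
        * ((Set.indicator {ω' | M ω' = 1} (fun _ => (1 : ℝ)) ω / e (X ω))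
              * (Set.indicator {ω' | Y ω' ≤ θ} (fun _ => (1 : ℝ)) ω - G (X ω))
            + G (X ω) - q) ∂P
      = -(1 / fθ)
          * ∑ x : α, ((e₀ x / e x - 1) * (G₀ x - G x) + (G₀ x - q))
              * (P {ω | X ω = x}).toReal := by
  set SM : Set Ω := {ω | M ω = 1}
  set SY : Set Ω := {ω | Y ω ≤ θ}
  have hSM : MeasurableSet SM := hM (measurableSet_singleton 1)
  have hSY : MeasurableSet SY := hY measurableSet_Iic
  have hpointwise (ω : Ω) :
      (SM.indicator (fun _ => (1 : ℝ)) ω / e (X ω)) * (SY.indicator (fun _ => 1) ω - G (X ω))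
          + G (X ω) - q
        = 1 / e (X ω) * (SY ∩ SM).indicator 1 ω - G (X ω) / e (X ω) * SM.indicator 1 ω
          + (G (X ω) - q) * Set.univ.indicator 1 ω := by
    simp only [Set.inter_indicator_one, Set.indicator_univ, Pi.mul_apply, Pi.one_apply,
      ← Pi.one_def]
    ring
  have hint₁ := integrable_comp_mul_indicator_one (P := P) hX (hSY.inter hSM) fun x => 1 / e x
  have hint₂ := integrable_comp_mul_indicator_one (P := P) hX hSM fun x => G x / e x
  have hint₃ := integrable_comp_mul_indicator_one (P := P) hX .univ fun x => G x - q
  rw [integral_const_mul, integral_congr_ae (.of_forall hpointwise),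
    integral_add (by exact hint₁.sub hint₂) hint₃, integral_sub hint₁ hint₂,
    integral_comp_mul_indicator_one hX (hSY.inter hSM) fun x => 1 / e x,
    integral_comp_mul_indicator_one hX hSM fun x => G x / e x,
    integral_comp_mul_indicator_one hX .univ fun x => G x - q, ← Finset.sum_sub_distrib,
    ← Finset.sum_add_distrib]
  congr 1
  refine Finset.sum_congr rfl fun x _ => ?_
  rw [he₀, hG₀, Set.univ_inter]
  simp only [← measureReal_def]
  exact cell_bias_eq (measureReal_mono_null Set.inter_subset_right)
    (measureReal_mono_null (Set.inter_subset_inter_left _ Set.inter_subset_right))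

/-- Exact representation of the bias of the efficient influence function:
`E₀[D_{η,θ}] = -(1/f(θ))·E₀[(e₀/e - 1)(G₀ - G) + (G₀ - q)]`. -/
theorem stmt2 {Ω α : Type*} [MeasurableSpace Ω] [Fintype α] [MeasurableSpace α]
    [MeasurableSingletonClass α]
    (P : Measure Ω) [IsProbabilityMeasure P]
    (X : Ω → α) (M : Ω → ℕ) (Y : Ω → ℝ)
    (hX : Measurable X) (hM : Measurable M) (hY : Measurable Y)
    (θ q fθ : ℝ) (hf : 0 < fθ)
    (e : α → ℝ) (G : α → ℝ)
    (he : ∀ x, e x ∈ Set.Ioc (0 : ℝ) 1) (hG : ∀ x, G x ∈ Set.Icc (0 : ℝ) 1)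
    (e₀ G₀ : α → ℝ)
    (he₀ : ∀ x, e₀ x = (P ({ω | M ω = 1} ∩ {ω | X ω = x})).toReal
                        / (P {ω | X ω = x}).toReal)
    (hG₀ : ∀ x, G₀ x = (P ({ω | Y ω ≤ θ} ∩ {ω | M ω = 1} ∩ {ω | X ω = x})).toReal
                        / (P ({ω | M ω = 1} ∩ {ω | X ω = x})).toReal)
    -- conditional independence  Y ⟂ M ∣ X  (for the event {Y ≤ θ}):
    (hCI : ∀ x : α,
      P ({ω | Y ω ≤ θ} ∩ {ω | M ω = 1} ∩ {ω | X ω = x}) * P {ω | X ω = x}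
        = P ({ω | Y ω ≤ θ} ∩ {ω | X ω = x}) * P ({ω | M ω = 1} ∩ {ω | X ω = x}))
    -- positivity:
    (hpos : ∀ x : α, P {ω | X ω = x} ≠ 0 → P ({ω | M ω = 1} ∩ {ω | X ω = x}) ≠ 0) :
    ∫ ω, -(1 / fθ)
        * ((Set.indicator {ω' | M ω' = 1} (fun _ => (1 : ℝ)) ω / e (X ω))
              * (Set.indicator {ω' | Y ω' ≤ θ} (fun _ => (1 : ℝ)) ω - G (X ω))
            + G (X ω) - q) ∂P
      = -(1 / fθ)
          * ∑ x : α, ((e₀ x / e x - 1) * (G₀ x - G x) + (G₀ x - q))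
              * (P {ω | X ω = x}).toReal :=
  stmt2_general P X M Y hX hM hY θ q fθ e G e₀ G₀ he₀ hG₀
end

section
/- Identification of the counterfactual distribution among the treated: under T ⟂ Y₀ | X and e(x) = P(T=1|X=x) < 1 almost everywhere, the distribution F(y) = P(Y₀ ≤ y | T=1) equals Σ_x P(Y ≤ y | T=0, X=x) · P(X=x | T=1), where Y = Y_T is the observed outcome. -/
open MeasureTheory

/-! On `{T = 0}` the observed outcome is `Y₀`, so `P(Y ≤ y | T = 0, X = x) = P(Y₀ ≤ y | T = 0, X = x)`,
and by ignorability this equals `P(Y₀ ≤ y | T = 1, X = x)`. Summing against `P(X = x | T = 1)` over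
the fibres of `X` recovers `P(Y₀ ≤ y | T = 1)`. Positivity makes every conditioning event with
`P(X = x) > 0` non-null; the fibres with `P(X = x) = 0` contribute nothing to either side. -/

theorem measure_eq_sum_measure_inter_fiber {Ω α : Type*} [MeasurableSpace Ω] [Fintype α]
    [MeasurableSpace α] [MeasurableSingletonClass α] (μ : Measure Ω) {X : Ω → α}
    (hX : Measurable X) (s : Set Ω) :
    μ s = ∑ x : α, μ (s ∩ {ω | X ω = x}) := by
  have hfiber (x : α) : MeasurableSet (X ⁻¹' {x}) := hX (measurableSet_singleton x)
  calc μ s = μ.restrict s (X ⁻¹' ↑(Finset.univ : Finset α)) := by simp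
    _ = ∑ x : α, μ.restrict s (X ⁻¹' {x}) :=
      (sum_measure_preimage_singleton _ fun x _ => hfiber x).symm
    _ = ∑ x : α, μ (s ∩ {ω | X ω = x}) := by
      simp only [Measure.restrict_apply (hfiber _), Set.inter_comm]; rfl

/-- When `b = 0` the right-hand side is `0` through the junk value `c / 0 = 0`. -/
theorem div_eq_div_mul_div_of_mul_eq_mul {a b c d : ℝ} (t : ℝ) (h : a * b = c * d)
    (hb : b = 0 → a = 0 ∧ d = 0) :
    a / t = c / b * (d / t) := by
  by_cases hb0 : b = 0
  · obtain ⟨rfl, rfl⟩ := hb hb0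
    simp
  · rw [div_mul_div_comm, ← h, mul_comm a b, mul_div_mul_left _ _ hb0]

theorem stmt11_general {Ω α : Type*} [MeasurableSpace Ω] [Fintype α] [MeasurableSpace α]
    [MeasurableSingletonClass α]
    (P : Measure Ω) [IsProbabilityMeasure P]
    (X : Ω → α) (T : Ω → ℕ) (Y₀ Y₁ Y : Ω → ℝ)
    (hX : Measurable X)
    -- observed outcome  Y = T·Y₁ + (1-T)·Y₀ :
    (hY : ∀ ω, Y ω = if T ω = 1 then Y₁ ω else Y₀ ω)
    -- ignorability  T ⟂ Y₀ ∣ X  (for the events {Y₀ ≤ y}):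
    (hCI : ∀ (y : ℝ) (x : α),
      P ({ω | Y₀ ω ≤ y} ∩ {ω | T ω = 1} ∩ {ω | X ω = x})
          * P ({ω | T ω = 0} ∩ {ω | X ω = x})
        = P ({ω | Y₀ ω ≤ y} ∩ {ω | T ω = 0} ∩ {ω | X ω = x})
            * P ({ω | T ω = 1} ∩ {ω | X ω = x}))
    -- positivity  P(T=1|X=x) < 1, i.e. P(T=0, X=x) > 0 on the support of X:
    (hpos : ∀ x : α, P {ω | X ω = x} ≠ 0 → P ({ω | T ω = 0} ∩ {ω | X ω = x}) ≠ 0)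
    (y : ℝ) :
    (P ({ω | Y₀ ω ≤ y} ∩ {ω | T ω = 1})).toReal / (P {ω | T ω = 1}).toReal
      = ∑ x : α,
          (P ({ω | Y ω ≤ y} ∩ {ω | T ω = 0} ∩ {ω | X ω = x})).toReal
              / (P ({ω | T ω = 0} ∩ {ω | X ω = x})).toReal
            * ((P ({ω | X ω = x} ∩ {ω | T ω = 1})).toReal
                / (P {ω | T ω = 1}).toReal) := by
  have hobserved : {ω | Y ω ≤ y} ∩ {ω | T ω = 0} = {ω | Y₀ ω ≤ y} ∩ {ω | T ω = 0} := by
    ext ω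
    simp +contextual [hY ω]
  rw [measure_eq_sum_measure_inter_fiber P hX, ENNReal.toReal_sum fun _ _ => measure_ne_top _ _,
    Finset.sum_div]
  refine Finset.sum_congr rfl fun x _ => ?_
  rw [hobserved, Set.inter_comm {ω | X ω = x}]
  apply div_eq_div_mul_div_of_mul_eq_mul
  · simp only [← ENNReal.toReal_mul, hCI y x]
  · intro hB
    have hx : P {ω | X ω = x} = 0 := by
      by_contra hx
      exact hpos x hx (((ENNReal.toReal_eq_zero_iff _).1 hB).resolve_right (measure_ne_top _ _))
    simp [measure_mono_null Set.inter_subset_right hx]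

/-- Identification of the counterfactual distribution among the treated:
under `T ⟂ Y₀ | X` and positivity `P(T=1|X=x) < 1`, with `P(T=1) > 0`,
`P(Y₀ ≤ y | T=1) = ∑ x, P(Y ≤ y | T=0, X=x) · P(X=x | T=1)`. -/
theorem stmt11 {Ω α : Type*} [MeasurableSpace Ω] [Fintype α] [MeasurableSpace α]
    [MeasurableSingletonClass α]
    (P : Measure Ω) [IsProbabilityMeasure P]
    (X : Ω → α) (T : Ω → ℕ) (Y₀ Y₁ Y : Ω → ℝ)
    (hX : Measurable X) (hT : Measurable T) (hY₀ : Measurable Y₀)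
    (hT01 : ∀ ω, T ω = 0 ∨ T ω = 1)
    -- observed outcome  Y = T·Y₁ + (1-T)·Y₀ :
    (hY : ∀ ω, Y ω = if T ω = 1 then Y₁ ω else Y₀ ω)
    -- ignorability  T ⟂ Y₀ ∣ X  (for the events {Y₀ ≤ y}):
    (hCI : ∀ (y : ℝ) (x : α),
      P ({ω | Y₀ ω ≤ y} ∩ {ω | T ω = 1} ∩ {ω | X ω = x})
          * P ({ω | T ω = 0} ∩ {ω | X ω = x})
        = P ({ω | Y₀ ω ≤ y} ∩ {ω | T ω = 0} ∩ {ω | X ω = x})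
            * P ({ω | T ω = 1} ∩ {ω | X ω = x}))
    -- positivity  P(T=1|X=x) < 1, i.e. P(T=0, X=x) > 0 on the support of X:
    (hpos : ∀ x : α, P {ω | X ω = x} ≠ 0 → P ({ω | T ω = 0} ∩ {ω | X ω = x}) ≠ 0)
    (hT1 : P {ω | T ω = 1} ≠ 0)
    (y : ℝ) :
    (P ({ω | Y₀ ω ≤ y} ∩ {ω | T ω = 1})).toReal / (P {ω | T ω = 1}).toReal
      = ∑ x : α,
          (P ({ω | Y ω ≤ y} ∩ {ω | T ω = 0} ∩ {ω | X ω = x})).toReal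
              / (P ({ω | T ω = 0} ∩ {ω | X ω = x})).toReal
            * ((P ({ω | X ω = x} ∩ {ω | T ω = 1})).toReal
                / (P {ω | T ω = 1}).toReal) :=
  stmt11_general P X T Y₀ Y₁ Y hX hY hCI hpos y
end

section
/- Double robustness of the treated-quantile influence function: define D_{η,θ}(Z) = -(1/f(θ))·[ ((1-T)/E(T))·(e(X)/(1-e(X)))·(1_{Y≤θ} - G(θ|0,X)) + (T/E(T))·(G(θ|0,X) - q) ]. If either G(·|0,x) equals the true conditional CDF G₀(·|0,x) = P₀(Y ≤ ·|T=0, X=x), or e equals the true propensity e₀(x) = P₀(T=1|X=x), then E₀[D_{η,θ₀}] = 0, where θ₀ satisfies E₀[G₀(θ₀|0,X) | T=1] = q. -/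
/-!
Integrate the influence function fibre by fibre over the finitely many values of `X`. Writing
`p₀ = P(T = 0, X = x)` and `p₁ = P(T = 1, X = x)`, the contribution of the fibre `{X = x}`
differs from `p₁ (G₀ x - q)` by the product of the two nuisance errors
`(G₀ x - G x) (e x / (1 - e x) · p₀ - p₁)`, and `e₀ / (1 - e₀) · p₀ = p₁`, so it vanishes as soon
as one nuisance is correct. Summing `p₁ (G₀ x - q)` over `x` gives `0` because `θ₀` is the
`q`-quantile of `F₀`.
-/

open MeasureTheory

section FiniteFibres

variable {Ω α : Type*} [MeasurableSpace Ω] [Fintype α] [MeasurableSpace α]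
  [MeasurableSingletonClass α] (P : Measure Ω) [IsFiniteMeasure P] {X : Ω → α}

theorem integrable_indicator_comp (hX : Measurable X) {A : Set Ω} (hA : MeasurableSet A)
    (f : α → ℝ) : Integrable (A.indicator fun ω => f (X ω)) P :=
  (Integrable.of_finite.comp_measurable hX).indicator hA

theorem integral_indicator_comp_eq_sum (hX : Measurable X) {A : Set Ω} (hA : MeasurableSet A)
    (f : α → ℝ) :
    ∫ ω, A.indicator (fun ω => f (X ω)) ω ∂P = ∑ x, P.real (A ∩ {ω | X ω = x}) * f x := by
  rw [integral_indicator hA, ← integral_map hX.aemeasurable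
    (measurable_of_finite f).aestronglyMeasurable, integral_fintype Integrable.of_finite]
  refine Finset.sum_congr rfl fun x _ => ?_
  rw [map_measureReal_apply hX (measurableSet_singleton x),
    measureReal_restrict_apply (hX (measurableSet_singleton x)), Set.inter_comm, smul_eq_mul]
  rfl

theorem sum_measureReal_inter_fibre (hX : Measurable X) {A : Set Ω} (hA : MeasurableSet A) :
    ∑ x, P.real (A ∩ {ω | X ω = x}) = P.real A := by
  have h := integral_indicator_comp_eq_sum P hX hA fun _ => (1 : ℝ)
  simp only [mul_one] at h
  rw [← h]
  exact integral_indicator_one hA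

end FiniteFibres

theorem measureReal_eq_add_of_binary {Ω : Type*} [MeasurableSpace Ω] (P : Measure Ω)
    [IsFiniteMeasure P] {T : Ω → ℕ} (hT : Measurable T) (hT01 : ∀ ω, T ω = 0 ∨ T ω = 1)
    (S : Set Ω) :
    P.real S = P.real ({ω | T ω = 0} ∩ S) + P.real ({ω | T ω = 1} ∩ S) := by
  have hcompl : {ω | T ω = 1} = {ω | T ω = 0}ᶜ := by
    ext ω
    rcases hT01 ω with h | h <;> simp [h]
  rw [hcompl, Set.inter_comm, Set.inter_comm _ S, ← Set.sdiff_eq]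
  exact (measureReal_inter_add_sdiff (hT (measurableSet_singleton 0))).symm

theorem measureReal_div_mul_cancel_of_subset {Ω : Type*} [MeasurableSpace Ω] (P : Measure Ω)
    [IsFiniteMeasure P] {s t : Set Ω} (h : s ⊆ t) : P.real s / P.real t * P.real t = P.real s :=
  div_mul_cancel_of_imp (measureReal_mono_null h)

theorem odds_mul_eq_of_eq_div_add {e p₀ p₁ : ℝ} (hp : p₀ + p₁ ≠ 0) (he : e = p₁ / (p₀ + p₁))
    (he1 : e ≠ 1) : e / (1 - e) * p₀ = p₁ := by
  have hp₀ : p₀ ≠ 0 := by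
    rintro rfl
    exact he1 (by rw [he, zero_add, div_self (by simpa using hp)])
  have h1e : 1 - e = p₀ / (p₀ + p₁) := by
    rw [he]
    field_simp
    ring
  rw [h1e, he, div_div_div_cancel_right₀ hp, div_mul_cancel₀ _ hp₀]

theorem doubly_robust_identity {pY p₀ p₁ r G G₀ q : ℝ} (hpY : pY = G₀ * p₀)
    (h : G = G₀ ∨ r * p₀ = p₁) :
    pY * r + p₀ * -(r * G) + p₁ * (G - q) = p₁ * (G₀ - q) := by
  rcases h with rfl | h
  · rw [hpY]; ring
  · rw [hpY, ← h]; ring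

theorem sum_mul_sub_eq_zero_of_weighted_mean {ι : Type*} (s : Finset ι) {w g : ι → ℝ} {W q : ℝ}
    (hW : W ≠ 0) (hsum : ∑ i ∈ s, w i = W) (hmean : ∑ i ∈ s, g i * (w i / W) = q) :
    ∑ i ∈ s, w i * (g i - q) = 0 := by
  have h : ∑ i ∈ s, w i * (g i - q)
      = (∑ i ∈ s, g i * (w i / W) - q * ((∑ i ∈ s, w i) / W)) * W := by
    simp_rw [Finset.sum_div, Finset.mul_sum, ← Finset.sum_sub_distrib, Finset.sum_mul]
    refine Finset.sum_congr rfl fun i _ => ?_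
    field_simp
  rw [h, hmean, hsum, div_self hW, mul_one, sub_self, zero_mul]

section InfluenceFunction

variable {Ω α : Type*} [MeasurableSpace Ω] [Fintype α] [MeasurableSpace α]
  [MeasurableSingletonClass α] (P : Measure Ω) [IsFiniteMeasure P] {X : Ω → α} {T : Ω → ℕ}
  {Y : Ω → ℝ}

theorem integral_influence_eq_sum (hX : Measurable X) (hT : Measurable T) (hY : Measurable Y)
    (hT01 : ∀ ω, T ω = 0 ∨ T ω = 1) (r G : α → ℝ) (c s θ q : ℝ) :
    ∫ ω, c * ((Set.indicator {ω' | T ω' = 0} (fun _ => (1 : ℝ)) ω / s) * r (X ω)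
          * (Set.indicator {ω' | Y ω' ≤ θ} (fun _ => (1 : ℝ)) ω - G (X ω))
        + (Set.indicator {ω' | T ω' = 1} (fun _ => (1 : ℝ)) ω / s) * (G (X ω) - q)) ∂P
      = c / s * ∑ x, (P.real ({ω | Y ω ≤ θ} ∩ {ω | T ω = 0} ∩ {ω | X ω = x}) * r x
          + P.real ({ω | T ω = 0} ∩ {ω | X ω = x}) * -(r x * G x)
          + P.real ({ω | T ω = 1} ∩ {ω | X ω = x}) * (G x - q)) := by
  set A₀ := {ω | T ω = 0}
  set A₁ := {ω | T ω = 1}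
  set B := {ω | Y ω ≤ θ} ∩ A₀
  have hA₀ : MeasurableSet A₀ := hT (measurableSet_singleton 0)
  have hA₁ : MeasurableSet A₁ := hT (measurableSet_singleton 1)
  have hB : MeasurableSet B := (measurableSet_le hY measurable_const).inter hA₀
  have hpointwise : ∀ ω, c * (A₀.indicator (fun _ => (1 : ℝ)) ω / s * r (X ω)
        * ({ω | Y ω ≤ θ}.indicator (fun _ => (1 : ℝ)) ω - G (X ω))
        + A₁.indicator (fun _ => (1 : ℝ)) ω / s * (G (X ω) - q))
      = c / s * (B.indicator (fun ω => r (X ω)) ω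
        + A₀.indicator (fun ω => -(r (X ω) * G (X ω))) ω
        + A₁.indicator (fun ω => G (X ω) - q) ω) := by
    intro ω
    by_cases hYω : Y ω ≤ θ <;> rcases hT01 ω with h | h <;>
      simp [Set.indicator, B, A₀, A₁, hYω, h] <;> ring
  have hiB : Integrable (B.indicator fun ω => r (X ω)) P := integrable_indicator_comp P hX hB r
  have hi₀ : Integrable (A₀.indicator fun ω => -(r (X ω) * G (X ω))) P :=
    integrable_indicator_comp P hX hA₀ fun x => -(r x * G x)
  have hi₁ : Integrable (A₁.indicator fun ω => G (X ω) - q) P :=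
    integrable_indicator_comp P hX hA₁ fun x => G x - q
  rw [integral_congr_ae (Filter.Eventually.of_forall hpointwise), integral_const_mul,
    integral_add, integral_add,
    integral_indicator_comp_eq_sum P hX hB r,
    integral_indicator_comp_eq_sum P hX hA₀ fun x => -(r x * G x),
    integral_indicator_comp_eq_sum P hX hA₁ fun x => G x - q,
    ← Finset.sum_add_distrib, ← Finset.sum_add_distrib]
  exacts [hiB, hi₀, hiB.add hi₀, hi₁]

end InfluenceFunction

theorem stmt12_general {Ω α : Type*} [MeasurableSpace Ω] [Fintype α] [MeasurableSpace α]
    [MeasurableSingletonClass α]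
    (P : Measure Ω) [IsProbabilityMeasure P]
    (X : Ω → α) (T : Ω → ℕ) (Y : Ω → ℝ)
    (hX : Measurable X) (hT : Measurable T) (hYm : Measurable Y)
    (hT01 : ∀ ω, T ω = 0 ∨ T ω = 1)
    (θ₀ q fθ : ℝ)
    -- candidate nuisances:
    (e : α → ℝ) (G : α → ℝ)
    (he : ∀ x, e x ∈ Set.Ioo (0 : ℝ) 1)
    -- true nuisances:
    (e₀ G₀ : α → ℝ)
    (he₀ : ∀ x, e₀ x = (P ({ω | T ω = 1} ∩ {ω | X ω = x})).toReal
                        / (P {ω | X ω = x}).toReal)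
    (hG₀ : ∀ x, G₀ x = (P ({ω | Y ω ≤ θ₀} ∩ {ω | T ω = 0} ∩ {ω | X ω = x})).toReal
                        / (P ({ω | T ω = 0} ∩ {ω | X ω = x})).toReal)
    -- positivity  0 < e₀(x) < 1 on the support of X, and P(T=1) > 0:
    (hT1 : P {ω | T ω = 1} ≠ 0)
    -- θ₀ is the q-th quantile of the identified counterfactual CDF:
    (hθ₀ : ∑ x : α, G₀ x * ((P ({ω | X ω = x} ∩ {ω | T ω = 1})).toReal
              / (P {ω | T ω = 1}).toReal) = q)
    -- double robustness hypothesis: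
    (hDR : (∀ x : α, P {ω | X ω = x} ≠ 0 → G x = G₀ x)
           ∨ (∀ x : α, P {ω | X ω = x} ≠ 0 → e x = e₀ x)) :
    ∫ ω, -(1 / fθ)
        * ((Set.indicator {ω' | T ω' = 0} (fun _ => (1 : ℝ)) ω
                / (P {ω' | T ω' = 1}).toReal)
              * (e (X ω) / (1 - e (X ω)))
              * (Set.indicator {ω' | Y ω' ≤ θ₀} (fun _ => (1 : ℝ)) ω - G (X ω))
            + (Set.indicator {ω' | T ω' = 1} (fun _ => (1 : ℝ)) ω
                / (P {ω' | T ω' = 1}).toReal)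
              * (G (X ω) - q)) ∂P = 0 := by
  simp only [← measureReal_def] at he₀ hG₀ hθ₀ ⊢
  refine (integral_influence_eq_sum P hX hT hYm hT01 (fun x => e x / (1 - e x)) G _ _ _ _).trans ?_
  have hpY : ∀ x, P.real ({ω | Y ω ≤ θ₀} ∩ {ω | T ω = 0} ∩ {ω | X ω = x})
      = G₀ x * P.real ({ω | T ω = 0} ∩ {ω | X ω = x}) := fun x => by
    rw [hG₀ x, measureReal_div_mul_cancel_of_subset P
      (Set.inter_subset_inter_left _ Set.inter_subset_right)]
  have hfibre : ∀ x, G x = G₀ x ∨ e x / (1 - e x) * P.real ({ω | T ω = 0} ∩ {ω | X ω = x})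
      = P.real ({ω | T ω = 1} ∩ {ω | X ω = x}) := by
    intro x
    by_cases hx : P {ω | X ω = x} = 0
    · right
      simp [measure_mono_null Set.inter_subset_right hx, Measure.real]
    rcases hDR with hG | he'
    · exact .inl (hG x hx)
    refine .inr (odds_mul_eq_of_eq_div_add ?_ ?_ (he x).2.ne)
    · rw [← measureReal_eq_add_of_binary P hT hT01]
      exact (measureReal_ne_zero_iff (measure_ne_top P _)).2 hx
    · rw [he' x hx, he₀ x, ← measureReal_eq_add_of_binary P hT hT01]
  simp_rw [Set.inter_comm {ω | X ω = _} {ω | T ω = 1}] at hθ₀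
  rw [Finset.sum_congr rfl fun x _ => doubly_robust_identity (hpY x) (hfibre x),
    sum_mul_sub_eq_zero_of_weighted_mean _ ((measureReal_ne_zero_iff (measure_ne_top P _)).2 hT1)
      (sum_measureReal_inter_fibre P hX (hT (measurableSet_singleton 1))) hθ₀, mul_zero]

/-- Double robustness of the treated-quantile influence function: if either
`G = G₀` or `e = e₀` (on the support of `X`), then `E₀[D_{η,θ₀}] = 0`, where
`θ₀` satisfies `E₀[G₀(θ₀|0,X) | T=1] = q`. -/
theorem stmt12 {Ω α : Type*} [MeasurableSpace Ω] [Fintype α] [MeasurableSpace α]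
    [MeasurableSingletonClass α]
    (P : Measure Ω) [IsProbabilityMeasure P]
    (X : Ω → α) (T : Ω → ℕ) (Y₀ Y : Ω → ℝ)
    (hX : Measurable X) (hT : Measurable T) (hYm : Measurable Y)
    (hT01 : ∀ ω, T ω = 0 ∨ T ω = 1)
    -- consistency:  Y = Y₀ on {T = 0}:
    (hY : ∀ ω, T ω = 0 → Y ω = Y₀ ω)
    (θ₀ q fθ : ℝ) (hf : 0 < fθ) (hq : q ∈ Set.Ioo (0 : ℝ) 1)
    -- candidate nuisances:
    (e : α → ℝ) (G : α → ℝ)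
    (he : ∀ x, e x ∈ Set.Ioo (0 : ℝ) 1) (hG : ∀ x, G x ∈ Set.Icc (0 : ℝ) 1)
    -- true nuisances:
    (e₀ G₀ : α → ℝ)
    (he₀ : ∀ x, e₀ x = (P ({ω | T ω = 1} ∩ {ω | X ω = x})).toReal
                        / (P {ω | X ω = x}).toReal)
    (hG₀ : ∀ x, G₀ x = (P ({ω | Y ω ≤ θ₀} ∩ {ω | T ω = 0} ∩ {ω | X ω = x})).toReal
                        / (P ({ω | T ω = 0} ∩ {ω | X ω = x})).toReal)
    -- ignorability  T ⟂ Y₀ ∣ X  (for the event {Y₀ ≤ θ₀}):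
    (hCI : ∀ x : α,
      P ({ω | Y₀ ω ≤ θ₀} ∩ {ω | T ω = 1} ∩ {ω | X ω = x})
          * P ({ω | T ω = 0} ∩ {ω | X ω = x})
        = P ({ω | Y₀ ω ≤ θ₀} ∩ {ω | T ω = 0} ∩ {ω | X ω = x})
            * P ({ω | T ω = 1} ∩ {ω | X ω = x}))
    -- positivity  0 < e₀(x) < 1 on the support of X, and P(T=1) > 0:
    (hpos0 : ∀ x : α, P {ω | X ω = x} ≠ 0 → P ({ω | T ω = 0} ∩ {ω | X ω = x}) ≠ 0)
    (hpos1 : ∀ x : α, P {ω | X ω = x} ≠ 0 → P ({ω | T ω = 1} ∩ {ω | X ω = x}) ≠ 0)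
    (hT1 : P {ω | T ω = 1} ≠ 0)
    -- θ₀ is the q-th quantile of the identified counterfactual CDF:
    (hθ₀ : ∑ x : α, G₀ x * ((P ({ω | X ω = x} ∩ {ω | T ω = 1})).toReal
              / (P {ω | T ω = 1}).toReal) = q)
    -- double robustness hypothesis:
    (hDR : (∀ x : α, P {ω | X ω = x} ≠ 0 → G x = G₀ x)
           ∨ (∀ x : α, P {ω | X ω = x} ≠ 0 → e x = e₀ x)) :
    ∫ ω, -(1 / fθ)
        * ((Set.indicator {ω' | T ω' = 0} (fun _ => (1 : ℝ)) ω
                / (P {ω' | T ω' = 1}).toReal)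
              * (e (X ω) / (1 - e (X ω)))
              * (Set.indicator {ω' | Y ω' ≤ θ₀} (fun _ => (1 : ℝ)) ω - G (X ω))
            + (Set.indicator {ω' | T ω' = 1} (fun _ => (1 : ℝ)) ω
                / (P {ω' | T ω' = 1}).toReal)
              * (G (X ω) - q)) ∂P = 0 :=
  stmt12_general P X T Y hX hT hYm hT01 θ₀ q fθ e G he e₀ G₀ he₀ hG₀ hT1 hθ₀ hDR
end

section
/- Variance lower bound for quantile vs. degenerate EIF: for the efficient influence function D₀(Z) = -(1/f₀(θ₀))·[(M/e₀(X))·(1_{Y≤θ₀} - G₀(θ₀|1,X)) + G₀(θ₀|1,X) - q] one has Var₀(D₀(Z)) ≥ q(1-q)/f₀(θ₀)², with equality when P₀(M=1)=1 and G₀(θ₀|1,X) is constant (no covariate information). -/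
/-!
On the fibre `X = x`, with `e = e₀(x)` and `G = G₀(x)`, the score
`ψ = (M/e)(1{Y ≤ θ₀} - G) + G - q` has mean `G - q` and second moment
`e⁻² P(M = 1, X = x) G(1 - G) + P(X = x) (G - q)²`, because `G` is exactly the probability of
`Y ≤ θ₀` on `{M = 1, X = x}`. Hence `E ψ = E G - q = 0`, and since
`e⁻² P(M = 1, X = x) = P(X = x) / e ≥ P(X = x)`, the variance of `ψ` is at least
`E[G(1 - G)] + E[(G - q)²] = q(1 - q)`, the law of total variance for `1{Y ≤ θ₀}`;
with no missingness `e = 1` and this is an equality. Scaling by `-1/f₀(θ₀)` divides by `f₀(θ₀)²`.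
-/

open MeasureTheory ProbabilityTheory

theorem integral_comp_eq_sum_measureReal_preimage {Ω β : Type*} [MeasurableSpace Ω]
    [Fintype β] [MeasurableSpace β] [MeasurableSingletonClass β]
    (P : Measure Ω) [IsFiniteMeasure P] {T : Ω → β} (hT : Measurable T) (g : β → ℝ) :
    ∫ ω, g (T ω) ∂P = ∑ t, P.real (T ⁻¹' {t}) * g t := by
  rw [← integral_map hT.aemeasurable (measurable_of_countable g).aestronglyMeasurable,
    integral_fintype Integrable.of_finite]
  simp [map_measureReal_apply hT (measurableSet_singleton _)]

theorem sum_mul_variance_add_sq_eq {α : Type*} (s : Finset α) (w G : α → ℝ) (q : ℝ)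
    (hw : ∑ x ∈ s, w x = 1) (hG : ∑ x ∈ s, G x * w x = q) :
    ∑ x ∈ s, w x * (G x * (1 - G x) + (G x - q) ^ 2) = q * (1 - q) := by
  have h : ∀ x ∈ s, w x * (G x * (1 - G x) + (G x - q) ^ 2)
      = (1 - 2 * q) * (G x * w x) + q ^ 2 * w x := fun x _ => by ring
  rw [Finset.sum_congr rfl h, Finset.sum_add_distrib, ← Finset.mul_sum, ← Finset.mul_sum, hG, hw]
  ring

theorem fiber_mean_eq (r G q pA pM pS : ℝ) (hA : G * pM = pA) :
    pA * (r * (1 - G) + G - q) + (pM - pA) * (r * (0 - G) + G - q) + (pS - pM) * (G - q)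
      = pS * (G - q) := by
  subst hA; ring

theorem fiber_second_moment_eq (r G q pA pM pS : ℝ) (hA : G * pM = pA) :
    pA * (r * (1 - G) + G - q) ^ 2 + (pM - pA) * (r * (0 - G) + G - q) ^ 2
        + (pS - pM) * (G - q) ^ 2
      = r ^ 2 * pM * (G * (1 - G)) + pS * (G - q) ^ 2 := by
  subst hA; ring

theorem mul_le_one_div_div_sq_mul {pA pM pS : ℝ} (h0 : 0 ≤ pA) (h1 : pA ≤ pM) (h2 : pM ≤ pS) :
    pS * (pA / pM * (1 - pA / pM)) ≤ (1 / (pM / pS)) ^ 2 * pM * (pA / pM * (1 - pA / pM)) := by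
  rcases (h0.trans h1).eq_or_lt with hM | hM
  · -- with `pM = 0` the junk value `pA / pM = 0` makes both sides vanish
    simp [← hM]
  · have hvar : 0 ≤ pA / pM * (1 - pA / pM) :=
      mul_nonneg (div_nonneg h0 hM.le) (sub_nonneg.mpr ((div_le_one hM).mpr h1))
    have hweight : (1 / (pM / pS)) ^ 2 * pM = pS * (pS / pM) := by
      field_simp [(hM.trans_le h2).ne']
    rw [hweight]
    exact mul_le_mul_of_nonneg_right
      (le_mul_of_one_le_right (hM.le.trans h2) ((one_le_div hM).mpr h2)) hvar

theorem one_div_div_self_sq_mul (pM v : ℝ) : (1 / (pM / pM)) ^ 2 * pM * v = pM * v := by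
  rcases eq_or_ne pM 0 with h | h
  · simp [h]
  · rw [div_self h]; ring

section MissingData

variable {Ω α : Type*} {X : Ω → α} {M : Ω → ℕ} {Y : Ω → ℝ}

/-- The observed data `(X, M, M · 1{Y ≤ θ₀})`: `Y` enters only through `1{Y ≤ θ₀}`, and only
when `M = 1`. -/
noncomputable def observation (X : Ω → α) (M : Ω → ℕ) (Y : Ω → ℝ) (θ₀ : ℝ) (ω : Ω) :
    α × Bool × Bool :=
  (X ω, decide (M ω = 1), decide (M ω = 1 ∧ Y ω ≤ θ₀))

noncomputable def quantileScore (e₀ G₀ : α → ℝ) (q : ℝ) (z : α × Bool × Bool) : ℝ :=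
  (if z.2.1 then 1 else 0) / e₀ z.1 * ((if z.2.2 then 1 else 0) - G₀ z.1) + G₀ z.1 - q

theorem indicator_div_mul_add_eq_quantileScore (e₀ G₀ : α → ℝ) (θ₀ q : ℝ) (ω : Ω) :
    Set.indicator {ω' | M ω' = 1} (fun _ => (1 : ℝ)) ω / e₀ (X ω)
        * (Set.indicator {ω' | Y ω' ≤ θ₀} (fun _ => (1 : ℝ)) ω - G₀ (X ω)) + G₀ (X ω) - q
      = quantileScore e₀ G₀ q (observation X M Y θ₀ ω) := by
  by_cases h : M ω = 1 <;> simp [quantileScore, observation, Set.indicator_apply, h]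

variable [MeasurableSpace Ω] [MeasurableSpace α]

theorem measurable_observation (hX : Measurable X) (hM : Measurable M) (hY : Measurable Y)
    (θ₀ : ℝ) : Measurable (observation X M Y θ₀) := by
  refine hX.prodMk ((measurable_to_bool ?_).prodMk (measurable_to_bool ?_))
  · convert hM (measurableSet_singleton 1) using 1
    ext; simp
  · convert (hM (measurableSet_singleton 1)).inter (hY (measurableSet_Iic (a := θ₀))) using 1
    ext; simp

variable [Fintype α] [MeasurableSingletonClass α] (P : Measure Ω)

theorem integral_comp_observation [IsFiniteMeasure P]
    (hX : Measurable X) (hM : Measurable M) (hY : Measurable Y) (θ₀ : ℝ)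
    (g : α × Bool × Bool → ℝ) :
    ∫ ω, g (observation X M Y θ₀ ω) ∂P
      = ∑ x, (P.real ({ω | Y ω ≤ θ₀} ∩ {ω | M ω = 1} ∩ {ω | X ω = x}) * g (x, true, true)
        + (P.real ({ω | M ω = 1} ∩ {ω | X ω = x})
            - P.real ({ω | Y ω ≤ θ₀} ∩ {ω | M ω = 1} ∩ {ω | X ω = x})) * g (x, true, false)
        + (P.real {ω | X ω = x} - P.real ({ω | M ω = 1} ∩ {ω | X ω = x})) * g (x, false, false))
      := by
  have hB : ∀ x, MeasurableSet ({ω | M ω = 1} ∩ {ω | X ω = x}) := fun x =>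
    (hM (measurableSet_singleton 1)).inter (hX (measurableSet_singleton x))
  have hA : ∀ x, MeasurableSet ({ω | Y ω ≤ θ₀} ∩ {ω | M ω = 1} ∩ {ω | X ω = x}) := fun x =>
    (hY measurableSet_Iic).inter (hM (measurableSet_singleton 1)) |>.inter
      (hX (measurableSet_singleton x))
  rw [integral_comp_eq_sum_measureReal_preimage P (measurable_observation hX hM hY θ₀),
    Fintype.sum_prod_type]
  refine Finset.sum_congr rfl fun x _ => ?_
  simp only [Fintype.sum_prod_type, Fintype.sum_bool]
  have h_tt : observation X M Y θ₀ ⁻¹' {(x, true, true)}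
      = {ω | Y ω ≤ θ₀} ∩ {ω | M ω = 1} ∩ {ω | X ω = x} := by
    ext ω; simp [observation, -not_le]; tauto
  have h_tf : observation X M Y θ₀ ⁻¹' {(x, true, false)}
      = ({ω | M ω = 1} ∩ {ω | X ω = x}) \ ({ω | Y ω ≤ θ₀} ∩ {ω | M ω = 1} ∩ {ω | X ω = x}) := by
    ext ω; simp [observation, -not_le]; tauto
  have h_ft : observation X M Y θ₀ ⁻¹' {(x, false, true)} = ∅ := by
    ext ω; simp [observation, -not_le]; tauto
  have h_ff : observation X M Y θ₀ ⁻¹' {(x, false, false)}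
      = {ω | X ω = x} \ ({ω | M ω = 1} ∩ {ω | X ω = x}) := by
    ext ω; simp [observation, -not_le]; tauto
  rw [h_tt, h_tf, h_ft, h_ff, measureReal_empty,
    measureReal_sdiff (Set.inter_subset_inter_left _ Set.inter_subset_right) (hA x),
    measureReal_sdiff Set.inter_subset_right (hB x)]
  ring

variable {θ₀ q : ℝ} {e₀ G₀ : α → ℝ}

theorem integral_quantileScore [IsFiniteMeasure P]
    (hX : Measurable X) (hM : Measurable M) (hY : Measurable Y)
    (hG₀ : ∀ x, G₀ x * P.real ({ω | M ω = 1} ∩ {ω | X ω = x})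
      = P.real ({ω | Y ω ≤ θ₀} ∩ {ω | M ω = 1} ∩ {ω | X ω = x})) :
    ∫ ω, quantileScore e₀ G₀ q (observation X M Y θ₀ ω) ∂P
      = ∑ x, P.real {ω | X ω = x} * (G₀ x - q) := by
  rw [integral_comp_observation P hX hM hY θ₀]
  refine Finset.sum_congr rfl fun x _ => ?_
  simp only [quantileScore, ite_true, Bool.false_eq_true, ite_false, zero_div, zero_mul, zero_add]
  exact fiber_mean_eq _ _ _ _ _ _ (hG₀ x)

theorem integral_quantileScore_sq [IsFiniteMeasure P]
    (hX : Measurable X) (hM : Measurable M) (hY : Measurable Y)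
    (hG₀ : ∀ x, G₀ x * P.real ({ω | M ω = 1} ∩ {ω | X ω = x})
      = P.real ({ω | Y ω ≤ θ₀} ∩ {ω | M ω = 1} ∩ {ω | X ω = x})) :
    ∫ ω, quantileScore e₀ G₀ q (observation X M Y θ₀ ω) ^ 2 ∂P
      = ∑ x, ((1 / e₀ x) ^ 2 * P.real ({ω | M ω = 1} ∩ {ω | X ω = x}) * (G₀ x * (1 - G₀ x))
          + P.real {ω | X ω = x} * (G₀ x - q) ^ 2) := by
  rw [integral_comp_observation P hX hM hY θ₀ (fun z => quantileScore e₀ G₀ q z ^ 2)]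
  refine Finset.sum_congr rfl fun x _ => ?_
  simp only [quantileScore, ite_true, Bool.false_eq_true, ite_false, zero_div, zero_mul, zero_add]
  exact fiber_second_moment_eq _ _ _ _ _ _ (hG₀ x)

variable [IsProbabilityMeasure P]

theorem sum_measureReal_fiber_eq_one (hX : Measurable X) :
    ∑ x, P.real {ω | X ω = x} = 1 := by
  rw [← probReal_univ (μ := P), ← Set.preimage_univ (f := X), ← Finset.coe_univ]
  exact sum_measureReal_preimage_singleton _ fun x _ => hX (measurableSet_singleton x)

theorem variance_quantileScore_eq_sum
    (hX : Measurable X) (hM : Measurable M) (hY : Measurable Y)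
    (hG₀ : ∀ x, G₀ x = P.real ({ω | Y ω ≤ θ₀} ∩ {ω | M ω = 1} ∩ {ω | X ω = x})
      / P.real ({ω | M ω = 1} ∩ {ω | X ω = x}))
    (hθ₀ : ∑ x, G₀ x * P.real {ω | X ω = x} = q) :
    variance (fun ω => quantileScore e₀ G₀ q (observation X M Y θ₀ ω)) P
      = ∑ x, ((1 / e₀ x) ^ 2 * P.real ({ω | M ω = 1} ∩ {ω | X ω = x}) * (G₀ x * (1 - G₀ x))
          + P.real {ω | X ω = x} * (G₀ x - q) ^ 2) := by
  have hG₀' : ∀ x, G₀ x * P.real ({ω | M ω = 1} ∩ {ω | X ω = x})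
      = P.real ({ω | Y ω ≤ θ₀} ∩ {ω | M ω = 1} ∩ {ω | X ω = x}) := fun x => by
    rw [hG₀ x]
    exact div_mul_cancel_of_imp
      (measureReal_mono_null (Set.inter_subset_inter_left _ Set.inter_subset_right))
  have hmean : ∫ ω, quantileScore e₀ G₀ q (observation X M Y θ₀ ω) ∂P = 0 := by
    simp only [integral_quantileScore P hX hM hY hG₀', mul_sub, Finset.sum_sub_distrib,
      ← Finset.sum_mul, sum_measureReal_fiber_eq_one P hX]
    rw [← hθ₀]
    simp [mul_comm]
  have hmeas : AEMeasurable (fun ω => quantileScore e₀ G₀ q (observation X M Y θ₀ ω)) P :=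
    ((measurable_of_countable (quantileScore e₀ G₀ q)).comp
      (measurable_observation hX hM hY θ₀)).aemeasurable
  rw [variance_of_integral_eq_zero hmeas hmean, integral_quantileScore_sq P hX hM hY hG₀']

theorem le_variance_quantileScore
    (hX : Measurable X) (hM : Measurable M) (hY : Measurable Y)
    (he₀ : ∀ x, e₀ x = P.real ({ω | M ω = 1} ∩ {ω | X ω = x}) / P.real {ω | X ω = x})
    (hG₀ : ∀ x, G₀ x = P.real ({ω | Y ω ≤ θ₀} ∩ {ω | M ω = 1} ∩ {ω | X ω = x})
      / P.real ({ω | M ω = 1} ∩ {ω | X ω = x}))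
    (hθ₀ : ∑ x, G₀ x * P.real {ω | X ω = x} = q) :
    q * (1 - q) ≤ variance (fun ω => quantileScore e₀ G₀ q (observation X M Y θ₀ ω)) P := by
  rw [variance_quantileScore_eq_sum P hX hM hY hG₀ hθ₀,
    ← sum_mul_variance_add_sq_eq _ _ _ _ (sum_measureReal_fiber_eq_one P hX) hθ₀]
  gcongr with x
  rw [mul_add, he₀ x, hG₀ x]
  refine add_le_add (mul_le_one_div_div_sq_mul measureReal_nonneg ?_ ?_) le_rfl
  · exact measureReal_mono (Set.inter_subset_inter_left _ Set.inter_subset_right)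
  · exact measureReal_mono Set.inter_subset_right

theorem variance_quantileScore_of_measure_eq_one
    (hX : Measurable X) (hM : Measurable M) (hY : Measurable Y)
    (he₀ : ∀ x, e₀ x = P.real ({ω | M ω = 1} ∩ {ω | X ω = x}) / P.real {ω | X ω = x})
    (hG₀ : ∀ x, G₀ x = P.real ({ω | Y ω ≤ θ₀} ∩ {ω | M ω = 1} ∩ {ω | X ω = x})
      / P.real ({ω | M ω = 1} ∩ {ω | X ω = x}))
    (hθ₀ : ∑ x, G₀ x * P.real {ω | X ω = x} = q) (hM₁ : P {ω | M ω = 1} = 1) :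
    variance (fun ω => quantileScore e₀ G₀ q (observation X M Y θ₀ ω)) P = q * (1 - q) := by
  have hobserved : ∀ x, P.real ({ω | M ω = 1} ∩ {ω | X ω = x}) = P.real {ω | X ω = x} := by
    have hsM : MeasurableSet {ω | M ω = 1} := hM (measurableSet_singleton 1)
    intro x
    rw [Set.inter_comm, measureReal_def, measure_inter_conull
      ((prob_compl_eq_zero_iff hsM).mpr hM₁), measureReal_def]
  rw [variance_quantileScore_eq_sum P hX hM hY hG₀ hθ₀,
    ← sum_mul_variance_add_sq_eq _ _ _ _ (sum_measureReal_fiber_eq_one P hX) hθ₀]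
  refine Finset.sum_congr rfl fun x _ => ?_
  rw [mul_add, he₀ x, hobserved x, one_div_div_self_sq_mul]

end MissingData

theorem stmt19_general {Ω α : Type*} [MeasurableSpace Ω] [Fintype α] [MeasurableSpace α]
    [MeasurableSingletonClass α]
    (P : Measure Ω) [IsProbabilityMeasure P]
    (X : Ω → α) (M : Ω → ℕ) (Y : Ω → ℝ)
    (hX : Measurable X) (hM : Measurable M) (hY : Measurable Y)
    (θ₀ q fθ : ℝ)
    (e₀ G₀ : α → ℝ)
    (he₀ : ∀ x, e₀ x = (P ({ω | M ω = 1} ∩ {ω | X ω = x})).toReal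
                        / (P {ω | X ω = x}).toReal)
    (hG₀ : ∀ x, G₀ x = (P ({ω | Y ω ≤ θ₀} ∩ {ω | M ω = 1} ∩ {ω | X ω = x})).toReal
                        / (P ({ω | M ω = 1} ∩ {ω | X ω = x})).toReal)
    -- F₀(θ₀) = E₀[G₀(θ₀|1,X)] = q :
    (hθ₀ : ∑ x : α, G₀ x * (P {ω | X ω = x}).toReal = q) :
    q * (1 - q) / fθ ^ 2
        ≤ variance (fun ω =>
            -(1 / fθ)
              * ((Set.indicator {ω' | M ω' = 1} (fun _ => (1 : ℝ)) ω / e₀ (X ω))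
                    * (Set.indicator {ω' | Y ω' ≤ θ₀} (fun _ => (1 : ℝ)) ω - G₀ (X ω))
                  + G₀ (X ω) - q)) P
      ∧ ((P {ω | M ω = 1} = 1 ∧ ∀ x : α, P {ω | X ω = x} ≠ 0 → G₀ x = q) →
          variance (fun ω =>
              -(1 / fθ)
                * ((Set.indicator {ω' | M ω' = 1} (fun _ => (1 : ℝ)) ω / e₀ (X ω))
                      * (Set.indicator {ω' | Y ω' ≤ θ₀} (fun _ => (1 : ℝ)) ω - G₀ (X ω))
                    + G₀ (X ω) - q)) P
            = q * (1 - q) / fθ ^ 2) := by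
  have hscale : ∀ v : ℝ, (-(1 / fθ)) ^ 2 * v = v / fθ ^ 2 := fun v => by ring
  simp only [indicator_div_mul_add_eq_quantileScore, variance_const_mul, hscale]
  refine ⟨?_, fun ⟨hM₁, _⟩ => ?_⟩
  · exact div_le_div_of_nonneg_right
      (le_variance_quantileScore P hX hM hY he₀ hG₀ hθ₀) (sq_nonneg fθ)
  · rw [variance_quantileScore_of_measure_eq_one P hX hM hY he₀ hG₀ hθ₀ hM₁]

/-- Variance lower bound for the quantile EIF:
`Var₀(D₀(Z)) ≥ q(1-q)/f₀(θ₀)²`, with equality when `P₀(M=1) = 1` and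
`G₀(θ₀|1,X)` is constant (hence equal to `q`). -/
theorem stmt19 {Ω α : Type*} [MeasurableSpace Ω] [Fintype α] [MeasurableSpace α]
    [MeasurableSingletonClass α]
    (P : Measure Ω) [IsProbabilityMeasure P]
    (X : Ω → α) (M : Ω → ℕ) (Y : Ω → ℝ)
    (hX : Measurable X) (hM : Measurable M) (hY : Measurable Y)
    (θ₀ q fθ : ℝ) (hf : 0 < fθ) (hq : q ∈ Set.Ioo (0 : ℝ) 1)
    (e₀ G₀ : α → ℝ)
    (he₀ : ∀ x, e₀ x = (P ({ω | M ω = 1} ∩ {ω | X ω = x})).toReal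
                        / (P {ω | X ω = x}).toReal)
    (hG₀ : ∀ x, G₀ x = (P ({ω | Y ω ≤ θ₀} ∩ {ω | M ω = 1} ∩ {ω | X ω = x})).toReal
                        / (P ({ω | M ω = 1} ∩ {ω | X ω = x})).toReal)
    -- conditional independence  Y ⟂ M ∣ X  (for the event {Y ≤ θ₀}):
    (hCI : ∀ x : α,
      P ({ω | Y ω ≤ θ₀} ∩ {ω | M ω = 1} ∩ {ω | X ω = x}) * P {ω | X ω = x}
        = P ({ω | Y ω ≤ θ₀} ∩ {ω | X ω = x}) * P ({ω | M ω = 1} ∩ {ω | X ω = x}))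
    -- positivity:
    (hpos : ∀ x : α, P {ω | X ω = x} ≠ 0 → P ({ω | M ω = 1} ∩ {ω | X ω = x}) ≠ 0)
    -- F₀(θ₀) = E₀[G₀(θ₀|1,X)] = q :
    (hθ₀ : ∑ x : α, G₀ x * (P {ω | X ω = x}).toReal = q) :
    q * (1 - q) / fθ ^ 2
        ≤ variance (fun ω =>
            -(1 / fθ)
              * ((Set.indicator {ω' | M ω' = 1} (fun _ => (1 : ℝ)) ω / e₀ (X ω))
                    * (Set.indicator {ω' | Y ω' ≤ θ₀} (fun _ => (1 : ℝ)) ω - G₀ (X ω))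
                  + G₀ (X ω) - q)) P
      ∧ ((P {ω | M ω = 1} = 1 ∧ ∀ x : α, P {ω | X ω = x} ≠ 0 → G₀ x = q) →
          variance (fun ω =>
              -(1 / fθ)
                * ((Set.indicator {ω' | M ω' = 1} (fun _ => (1 : ℝ)) ω / e₀ (X ω))
                      * (Set.indicator {ω' | Y ω' ≤ θ₀} (fun _ => (1 : ℝ)) ω - G₀ (X ω))
                    + G₀ (X ω) - q)) P
            = q * (1 - q) / fθ ^ 2) :=
  stmt19_general P X M Y hX hM hY θ₀ q fθ e₀ G₀ he₀ hG₀ hθ₀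
end
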